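/- arXiv:2110.04263 — 5 statements merged into one kernel-verified Lean document; each statement's English description precedes it below -/
import Mathlib

section
/- For every number of the form N = 3^β · 7^δ with β, δ ≥ 0, we have 3^β · 7^δ mod 4 ∈ {1, 3} and (3^β · 7^δ div 10) mod 2 = 0, i.e. the tens digit of N is even. -/
lemma pow3_mod100 (β : ℕ) : 3 ^ β % 100 = 3 ^ (β % 20) % 100 := by
  conv_lhs => rw [← Nat.div_add_mod β 20, pow_add, pow_mul, Nat.mul_mod,
    Nat.pow_mod]
  norm_num

lemma pow7_mod100 (δ : ℕ) : 7 ^ δ % 100 = 7 ^ (δ % 4) % 100 := by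
  conv_lhs => rw [← Nat.div_add_mod δ 4, pow_add, pow_mul, Nat.mul_mod,
    Nat.pow_mod]
  norm_num

/-- For all `β, δ`, the tens digit of `3^β * 7^δ` is even; moreover
`3^β * 7^δ mod 4 ∈ {1, 3}` and `(3^β * 7^δ div 10) mod 2 = 0`. -/
theorem tensDigit_even_of_pow3_mul_pow7 (β δ : ℕ) :
    Even ((3 ^ β * 7 ^ δ / 10) % 10) ∧
    (3 ^ β * 7 ^ δ % 4 = 1 ∨ 3 ^ β * 7 ^ δ % 4 = 3) ∧
    (3 ^ β * 7 ^ δ / 10) % 2 = 0 := by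
  set N := 3 ^ β * 7 ^ δ with hN
  have h100 : N % 100 = (3 ^ (β % 20) * 7 ^ (δ % 4)) % 100 := by
    rw [hN, Nat.mul_mod, pow3_mod100, pow7_mod100, ← Nat.mul_mod]
  have h1 : (N / 10) % 10 = (N % 100) / 10 := by
    conv_lhs => rw [← Nat.div_add_mod N 100]
    omega
  have h2 : (N / 10) % 2 = (N % 100) % 20 / 10 := by
    conv_lhs => rw [← Nat.div_add_mod N 100]
    omega
  have h4 : N % 4 = (N % 100) % 4 := (Nat.mod_mod_of_dvd N (by norm_num)).symm
  rw [Nat.even_iff, h1, h2, h4, h100]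
  have hb : β % 20 < 20 := Nat.mod_lt _ (by norm_num)
  have hd : δ % 4 < 4 := Nat.mod_lt _ (by norm_num)
  interval_cases (β % 20) <;> interval_cases (δ % 4) <;> decide
end

section
/- If N is an odd multiple of 5^5 all of whose decimal digits are odd, then either N = 9375 or N ≡ 59375 (mod 10^5). -/
set_option maxHeartbeats 1000000 in
/-- If `N` is an odd multiple of `5^5` all of whose decimal digits are odd,
then `N = 9375` or `N ≡ 59375 (mod 10^5)`. -/
theorem oddMultiple_3125_allDigitsOdd (N : ℕ)
    (hmul : ∃ i : ℕ, N = 3125 * (2 * i + 1))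
    (hdig : ∀ d ∈ Nat.digits 10 N, Odd d) :
    N = 9375 ∨ N % 100000 = 59375 := by
  obtain ⟨i, hi⟩ := hmul
  have hN : N % 6250 = 3125 := by omega
  have hN3 : 3125 ≤ N := by omega
  clear hi
  have e1 : Nat.digits 10 N = N % 10 :: Nat.digits 10 (N / 10) :=
    Nat.digits_def' (by norm_num) (by omega)
  have e2 : Nat.digits 10 (N / 10) = N / 10 % 10 :: Nat.digits 10 (N / 10 / 10) :=
    Nat.digits_def' (by norm_num) (by omega)
  have e3 : Nat.digits 10 (N / 10 / 10) = N / 10 / 10 % 10 :: Nat.digits 10 (N / 10 / 10 / 10) :=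
    Nat.digits_def' (by norm_num) (by omega)
  have e4 : Nat.digits 10 (N / 10 / 10 / 10) =
      N / 10 / 10 / 10 % 10 :: Nat.digits 10 (N / 10 / 10 / 10 / 10) :=
    Nat.digits_def' (by norm_num) (by omega)
  have d0 := Nat.odd_iff.mp <| hdig (N % 10) (by rw [e1]; simp)
  have d1 := Nat.odd_iff.mp <| hdig (N / 10 % 10) (by rw [e1, e2]; simp)
  have d2 := Nat.odd_iff.mp <| hdig (N / 10 / 10 % 10) (by rw [e1, e2, e3]; simp)
  have d3 := Nat.odd_iff.mp <| hdig (N / 10 / 10 / 10 % 10) (by rw [e1, e2, e3, e4]; simp)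
  have w1 : N % 50 = 25 := by clear d0 d1 d2 d3; omega
  have w2 : N % 1250 = 625 := by clear d0 d1 d2 d3 w1; omega
  have s2 : N % 100 = 75 := by clear hN d0 d2 d3 w2; omega
  have s3 : N % 1000 = 375 := by clear hN d0 d1 d3 w1; omega
  have s4 : N % 10000 = 9375 := by clear hN d0 d1 d2 w1 s2; omega
  by_cases h : N < 10000
  · left; clear hN d0 d1 d2 d3 w1 w2 s2 s3 hdig; omega
  · right
    have e5 : Nat.digits 10 (N / 10 / 10 / 10 / 10) =
        N / 10 / 10 / 10 / 10 % 10 :: Nat.digits 10 (N / 10 / 10 / 10 / 10 / 10) :=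
      Nat.digits_def' (by norm_num)
        (by clear hN hN3 w1 w2 s2 s3 s4 d0 d1 d2 d3; omega)
    have d4 := Nat.odd_iff.mp <|
      hdig (N / 10 / 10 / 10 / 10 % 10) (by rw [e1, e2, e3, e4, e5]; simp)
    clear hdig e1 e2 e3 e4 e5 d0 d1 d2 d3 w1 w2 s2 s3 hN3
    omega
end

section
/- Let m₁₂ = (10^12 − 1)/(3^3 · 7). Then m₁₂ = 11 · 13 · 37 · 101 · 9901, the multiplicative order of 10 modulo m₁₂ is 12, and for natural numbers u, w: 3^u · 7^w ≡ 1 (mod m₁₂) if and only if u ≡ 0 (mod 9900) and w ≡ 0 (mod 900). -/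
set_option exponentiation.threshold 20000
set_option maxHeartbeats 4000000

private lemma zpow_eq (n a k r : ℕ) (h : a ^ k % n = r) :
    ((a : ZMod n)) ^ k = (r : ZMod n) := by
  rw [← Nat.cast_pow, ← ZMod.natCast_mod, h]

private lemma zpow_ne (n a k r : ℕ) (h : a ^ k % n = r) (hr : ((r : ℕ) : ZMod n) ≠ 1) :
    ((a : ZMod n)) ^ k ≠ 1 := by
  rw [zpow_eq n a k r h]; exact hr

private lemma ord_eq (p g d : ℕ) (hd : 0 < d)
    (hq : ∀ q : ℕ, q.Prime → q ∣ d → ((g : ZMod p)) ^ (d / q) ≠ 1)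
    (h1 : ((g : ZMod p)) ^ d = 1) : orderOf ((g : ℕ) : ZMod p) = d :=
  orderOf_eq_of_pow_and_pow_div_prime hd h1 hq

private lemma dvd_key (p d a b u w : ℕ) (g : ZMod p) (hord : orderOf g = d)
    (h3 : ((3 : ℕ) : ZMod p) = g ^ a) (h7 : ((7 : ℕ) : ZMod p) = g ^ b)
    (h : ((3 : ℕ) : ZMod p) ^ u * ((7 : ℕ) : ZMod p) ^ w = 1) : d ∣ a * u + b * w := by
  rw [h3, h7, ← pow_mul, ← pow_mul, ← pow_add] at h
  exact hord ▸ orderOf_dvd_iff_pow_eq_one.mpr h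

private lemma prime_dvd_9900 (q : ℕ) (hq : q.Prime) (h : q ∣ 9900) :
    q = 2 ∨ q = 3 ∨ q = 5 ∨ q = 11 := by
  have h' : q ∣ 2 ^ 2 * (3 ^ 2 * (5 ^ 2 * 11)) := by norm_num at h ⊢; exact h
  rcases (Nat.Prime.dvd_mul hq).mp h' with h2 | h'
  · exact Or.inl ((Nat.prime_dvd_prime_iff_eq hq (by norm_num)).mp (hq.dvd_of_dvd_pow h2))
  rcases (Nat.Prime.dvd_mul hq).mp h' with h3 | h'
  · exact Or.inr (Or.inl ((Nat.prime_dvd_prime_iff_eq hq (by norm_num)).mp (hq.dvd_of_dvd_pow h3)))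
  rcases (Nat.Prime.dvd_mul hq).mp h' with h5 | h'
  · exact Or.inr (Or.inr (Or.inl ((Nat.prime_dvd_prime_iff_eq hq (by norm_num)).mp
      (hq.dvd_of_dvd_pow h5))))
  · exact Or.inr (Or.inr (Or.inr ((Nat.prime_dvd_prime_iff_eq hq (by norm_num)).mp h')))

private lemma small_prime_cases (q d q1 q2 : ℕ) (hd : d ≤ 100)
    (hcase : ∀ q' : ℕ, q' ≤ 100 → q'.Prime → q' ∣ d → q' = q1 ∨ q' = q2)
    (hq : q.Prime) (h : q ∣ d) (hd0 : 0 < d) : q = q1 ∨ q = q2 :=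
  hcase q (le_trans (Nat.le_of_dvd hd0 h) hd) hq h


private lemma dvd_reduce (d k x y : ℕ) (h : d ∣ y) (he : y = d * k + x) : d ∣ x :=
  (Nat.dvd_add_right ⟨k, rfl⟩).mp (he ▸ h)

private lemma crt4 (u w : ℕ) (B1 : 4 ∣ w) (B2 : 4 ∣ u + w) : 4 ∣ u ∧ 4 ∣ w := by omega

private lemma crt9 (u w : ℕ) (B3 : 9 ∣ u + 4*w) (B4 : 3 ∣ 2*u + w) (B5 : 9 ∣ 6*u + 7*w) :
    9 ∣ u ∧ 9 ∣ w := by omega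

private lemma crt25 (u w : ℕ) (B6 : 5 ∣ 4*u + w) (B7 : 25 ∣ 16*u + w)
    (B8 : 25 ∣ 7*u + 20*w) : 25 ∣ u ∧ 25 ∣ w := by omega

private lemma crt11 (u : ℕ) (B9 : 11 ∣ 2*u) : 11 ∣ u := by omega

/-- Properties of `m₁₂ = (10^12 − 1)/(3^3 · 7)`: its factorization, the order of
`10` modulo `m₁₂`, and the characterization of when `3^u * 7^w ≡ 1 (mod m₁₂)`. -/
theorem m12_properties :
    (10 ^ 12 - 1) / (3 ^ 3 * 7) = 11 * 13 * 37 * 101 * 9901 ∧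
    orderOf (10 : ZMod ((10 ^ 12 - 1) / (3 ^ 3 * 7))) = 12 ∧
    ∀ u w : ℕ,
      ((3 : ZMod ((10 ^ 12 - 1) / (3 ^ 3 * 7))) ^ u * 7 ^ w = 1 ↔
        u % 9900 = 0 ∧ w % 900 = 0) := by
  have hm : (10 ^ 12 - 1) / (3 ^ 3 * 7) = 5291005291 := by norm_num
  rw [hm]
  refine ⟨by norm_num, ?_, ?_⟩
  · -- orderOf 10 = 12
    have : orderOf ((10 : ℕ) : ZMod 5291005291) = 12 := by
      apply ord_eq _ _ _ (by norm_num) ?_ (by simpa using zpow_eq 5291005291 10 12 1 (by decide))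
      intro q hq hqd
      rcases small_prime_cases q 12 2 3 (by norm_num)
        (by intro q' hle hp hdvd; interval_cases q' <;> revert hdvd hp <;> decide)
        hq hqd (by norm_num) with rfl | rfl
      · exact zpow_ne 5291005291 10 (12 / 2) 1000000 (by decide) (by decide)
      · exact zpow_ne 5291005291 10 (12 / 3) 10000 (by decide) (by decide)
    simpa using this
  · intro u w
    constructor
    · -- forward: equation implies divisibilities
      intro h
      have h' : ((3 : ℕ) : ZMod 5291005291) ^ u * ((7 : ℕ) : ZMod 5291005291) ^ w = 1 := by
        push_cast; exact h
      -- order facts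
      have o11 : orderOf ((7 : ℕ) : ZMod 11) = 10 := by
        apply ord_eq _ _ _ (by norm_num) ?_ (by simpa using zpow_eq 11 7 10 1 (by decide))
        intro q hq hqd
        rcases small_prime_cases q 10 2 5 (by norm_num)
          (by intro q' hle hp hdvd; interval_cases q' <;> revert hdvd hp <;> decide)
          hq hqd (by norm_num) with rfl | rfl
        · exact zpow_ne 11 7 (10 / 2) 10 (by decide) (by decide)
        · exact zpow_ne 11 7 (10 / 5) 5 (by decide) (by decide)
      have o13 : orderOf ((7 : ℕ) : ZMod 13) = 12 := by
        apply ord_eq _ _ _ (by norm_num) ?_ (by simpa using zpow_eq 13 7 12 1 (by decide))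
        intro q hq hqd
        rcases small_prime_cases q 12 2 3 (by norm_num)
          (by intro q' hle hp hdvd; interval_cases q' <;> revert hdvd hp <;> decide)
          hq hqd (by norm_num) with rfl | rfl
        · exact zpow_ne 13 7 (12 / 2) 12 (by decide) (by decide)
        · exact zpow_ne 13 7 (12 / 3) 9 (by decide) (by decide)
      have o37 : orderOf ((3 : ℕ) : ZMod 37) = 18 := by
        apply ord_eq _ _ _ (by norm_num) ?_ (by simpa using zpow_eq 37 3 18 1 (by decide))
        intro q hq hqd
        rcases small_prime_cases q 18 2 3 (by norm_num)
          (by intro q' hle hp hdvd; interval_cases q' <;> revert hdvd hp <;> decide)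
          hq hqd (by norm_num) with rfl | rfl
        · exact zpow_ne 37 3 (18 / 2) 36 (by decide) (by decide)
        · exact zpow_ne 37 3 (18 / 3) 26 (by decide) (by decide)
      have o101 : orderOf ((7 : ℕ) : ZMod 101) = 100 := by
        apply ord_eq _ _ _ (by norm_num) ?_ (by simpa using zpow_eq 101 7 100 1 (by decide))
        intro q hq hqd
        rcases small_prime_cases q 100 2 5 (by norm_num)
          (by intro q' hle hp hdvd; interval_cases q' <;> revert hdvd hp <;> decide)
          hq hqd (by norm_num) with rfl | rfl
        · exact zpow_ne 101 7 (100 / 2) 100 (by decide) (by decide)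
        · exact zpow_ne 101 7 (100 / 5) 84 (by decide) (by decide)
      have o9901 : orderOf ((2 : ℕ) : ZMod 9901) = 9900 := by
        apply ord_eq _ _ _ (by norm_num) ?_ (by simpa using zpow_eq 9901 2 9900 1 (by decide))
        intro q hq hqd
        rcases prime_dvd_9900 q hq hqd with rfl | rfl | rfl | rfl
        · exact zpow_ne 9901 2 (9900 / 2) 9900 (by decide) (by decide)
        · exact zpow_ne 9901 2 (9900 / 3) 99 (by decide) (by decide)
        · exact zpow_ne 9901 2 (9900 / 5) 7611 (by decide) (by decide)
        · exact zpow_ne 9901 2 (9900 / 11) 9458 (by decide) (by decide)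
      -- push the equation to each prime factor
      have cast_eq : ∀ (p : ℕ) (hp : (p : ℕ) ∣ 5291005291),
          ((3 : ℕ) : ZMod p) ^ u * ((7 : ℕ) : ZMod p) ^ w = 1 := by
        intro p hp
        have := congrArg (ZMod.castHom hp (ZMod p)) h'
        simpa only [map_mul, map_pow, map_natCast, map_one] using this
      have H1 : 10 ∣ 4 * u + 1 * w :=
        dvd_key 11 10 4 1 u w ((7 : ℕ) : ZMod 11) o11
          ((zpow_eq 11 7 4 3 (by decide)).symm) (pow_one _).symm
          (cast_eq 11 (by norm_num))
      have H2 : 12 ∣ 8 * u + 1 * w :=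
        dvd_key 13 12 8 1 u w ((7 : ℕ) : ZMod 13) o13
          ((zpow_eq 13 7 8 3 (by decide)).symm) (pow_one _).symm
          (cast_eq 13 (by norm_num))
      have H3 : 18 ∣ 1 * u + 4 * w :=
        dvd_key 37 18 1 4 u w ((3 : ℕ) : ZMod 37) o37
          (pow_one _).symm ((zpow_eq 37 3 4 7 (by decide)).symm)
          (cast_eq 37 (by norm_num))
      have H4 : 100 ∣ 41 * u + 1 * w :=
        dvd_key 101 100 41 1 u w ((7 : ℕ) : ZMod 101) o101
          ((zpow_eq 101 7 41 3 (by decide)).symm) (pow_one _).symm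
          (cast_eq 101 (by norm_num))
      have H5 : 9900 ∣ 9132 * u + 9295 * w :=
        dvd_key 9901 9900 9132 9295 u w ((2 : ℕ) : ZMod 9901) o9901
          ((zpow_eq 9901 2 9132 3 (by decide)).symm)
          ((zpow_eq 9901 2 9295 7 (by decide)).symm)
          (cast_eq 9901 (by norm_num))
      -- extract small congruences with reduced coefficients
      have B1 : 4 ∣ w := dvd_reduce 4 (2*u) w _ (dvd_trans (by norm_num) H2) (by ring)
      have B2 : 4 ∣ u + w := dvd_reduce 4 (10*u) (u+w) _ (dvd_trans (by norm_num) H4) (by ring)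
      have B3 : 9 ∣ u + 4*w := dvd_trans (show (9:ℕ) ∣ 18 by norm_num) (by simpa using H3)
      have B4 : 3 ∣ 2*u + w := dvd_reduce 3 (2*u) (2*u+w) _ (dvd_trans (by norm_num) H2) (by ring)
      have B5 : 9 ∣ 6*u + 7*w :=
        dvd_reduce 9 (1014*u + 1032*w) (6*u+7*w) _ (dvd_trans (by norm_num) H5) (by ring)
      have B6 : 5 ∣ 4*u + w := dvd_trans (show (5:ℕ) ∣ 10 by norm_num) (by simpa using H1)
      have B7 : 25 ∣ 16*u + w := dvd_reduce 25 u (16*u+w) _ (dvd_trans (by norm_num) H4) (by ring)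
      have B8 : 25 ∣ 7*u + 20*w :=
        dvd_reduce 25 (365*u + 371*w) (7*u+20*w) _ (dvd_trans (by norm_num) H5) (by ring)
      have B9 : 11 ∣ 2*u :=
        dvd_reduce 11 (830*u + 845*w) (2*u) _ (dvd_trans (by norm_num) H5) (by ring)
      obtain ⟨hu4, hw4⟩ := crt4 u w B1 B2
      obtain ⟨hu9, hw9⟩ := crt9 u w B3 B4 B5
      obtain ⟨hu25, hw25⟩ := crt25 u w B6 B7 B8
      have hu11 := crt11 u B9
      have hu36 : 36 ∣ u := Nat.Coprime.mul_dvd_of_dvd_of_dvd (by norm_num) hu4 hu9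
      have hu900 : 900 ∣ u := Nat.Coprime.mul_dvd_of_dvd_of_dvd (by norm_num) hu36 hu25
      have hu9900 : 9900 ∣ u := by
        have := Nat.Coprime.mul_dvd_of_dvd_of_dvd (show Nat.Coprime 900 11 by norm_num) hu900 hu11
        exact dvd_trans (by norm_num) this
      have hw36 : 36 ∣ w := Nat.Coprime.mul_dvd_of_dvd_of_dvd (by norm_num) hw4 hw9
      have hw900 : 900 ∣ w := Nat.Coprime.mul_dvd_of_dvd_of_dvd (by norm_num) hw36 hw25
      exact ⟨Nat.mod_eq_zero_of_dvd hu9900, Nat.mod_eq_zero_of_dvd hw900⟩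
    · -- backward: divisibilities imply equation
      rintro ⟨hu, hw⟩
      obtain ⟨a, rfl⟩ : 9900 ∣ u := Nat.dvd_of_mod_eq_zero hu
      obtain ⟨b, rfl⟩ : 900 ∣ w := Nat.dvd_of_mod_eq_zero hw
      have h3 : (3 : ZMod 5291005291) ^ 9900 = 1 := by
        simpa using zpow_eq 5291005291 3 9900 1 (by decide)
      have h7 : (7 : ZMod 5291005291) ^ 900 = 1 := by
        simpa using zpow_eq 5291005291 7 900 1 (by decide)
      rw [pow_mul, pow_mul, h3, h7, one_pow, one_pow, one_mul]
end

section
/- Let A be the set of positive integers whose decimal digits are exactly two 4s, one 7, and any number of 1s (in any order). Then no element of A is divisible by 2^8; moreover 111744 ∈ A and 2^7 divides 111744, so 2^7 is the maximal power of two dividing any element of A. -/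
/-!
Since `2 ^ 8 ∣ 10 ^ 8`, whether `2 ^ 8` divides `x` depends only on the last eight decimal
digits of `x`. These form a nonempty word of length at most eight in the letters `1`, `4`, `7`
with at most two `4`s and at most one `7`, and a finite check shows that no such word is a
multiple of `2 ^ 8`.
-/

/-- The set of positive integers whose decimal digits are exactly two `4`s,
one `7`, and any number of `1`s. -/
def A447 : Set ℕ :=
  {x | 0 < x ∧ (Nat.digits 10 x).count 4 = 2 ∧ (Nat.digits 10 x).count 7 = 1 ∧
       ∀ d ∈ Nat.digits 10 x, d = 1 ∨ d = 4 ∨ d = 7}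

theorem Nat.dvd_iff_dvd_ofDigits_take_digits {b k m : ℕ} (hb : 2 ≤ b) (hm : m ∣ b ^ k) (n : ℕ) :
    m ∣ n ↔ m ∣ Nat.ofDigits b ((Nat.digits b n).take k) := by
  rw [← Nat.self_mod_pow_eq_ofDigits_take k n hb, Nat.dvd_mod_iff hm]

theorem List.mem_sections_replicate_length {α : Type*} {D L : List α} (h : ∀ a ∈ L, a ∈ D) :
    L ∈ (List.replicate L.length D).sections := by
  induction L with
  | nil => simp
  | cons a L ih => simp_all [List.mem_sections, List.replicate_succ]

set_option maxRecDepth 100000 in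
theorem not_two_pow_eight_dvd_ofDigits_of_short_words :
    ∀ n ∈ List.range 9, ∀ L ∈ (List.replicate n [1, 4, 7]).sections,
      L ≠ [] → L.count 4 ≤ 2 → L.count 7 ≤ 1 → ¬ 2 ^ 8 ∣ Nat.ofDigits 10 L := by
  decide +kernel

theorem not_two_pow_eight_dvd_ofDigits {L : List ℕ} (hne : L ≠ [])
    (hd : ∀ d ∈ L, d = 1 ∨ d = 4 ∨ d = 7) (h4 : L.count 4 ≤ 2) (h7 : L.count 7 ≤ 1)
    (hlen : L.length ≤ 8) : ¬ 2 ^ 8 ∣ Nat.ofDigits 10 L :=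
  not_two_pow_eight_dvd_ofDigits_of_short_words L.length (List.mem_range.2 (by omega)) L
    (List.mem_sections_replicate_length (by simpa using hd)) hne h4 h7

/-- No element of `A447` is divisible by `2^8`; moreover `111744 ∈ A447` and
`2^7 ∣ 111744`, so `2^7` is the maximal power of two dividing any element. -/
theorem maxPowerOfTwo_A447 :
    (∀ x ∈ A447, ¬ 2 ^ 8 ∣ x) ∧ 111744 ∈ A447 ∧ 2 ^ 7 ∣ 111744 := by
  refine ⟨?_, by norm_num [A447], by norm_num⟩
  rintro x ⟨hx, h4, h7, hd⟩
  have htake : ((Nat.digits 10 x).take 8).Sublist (Nat.digits 10 x) := List.take_sublist 8 _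
  rw [Nat.dvd_iff_dvd_ofDigits_take_digits (b := 10) (k := 8) (by norm_num) (by norm_num)]
  refine not_two_pow_eight_dvd_ofDigits ?_ (fun d hd' => hd d (htake.subset hd'))
    (h4 ▸ htake.count_le 4) (h7 ▸ htake.count_le 7) (List.length_take_le _ _)
  simpa [List.take_eq_nil_iff, Nat.digits_ne_nil_iff_ne_zero] using hx.ne'
end

section
/- Let A be a set of positive integers whose decimal digits avoid 0 and where each digit j ∈ {2,…,9} appears at most n_j times (digit 1 unrestricted). Fix e ≥ 1 and let C_e be the union of: (i) all elements of A with fewer than e digits, and (ii) all e-digit integers without digit 0 in which each digit j appears at most n_j times. If no element of C_e is divisible by 2^e, then no element of A is divisible by 2^e. -/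
/-!
Truncating `x` to its last `e` decimal digits does not change its residue modulo `2 ^ e`,
since `2 ^ e ∣ 10 ^ e`. When `x` has no digit `0` and at least `e` digits, the truncation
`x % 10 ^ e` has exactly `e` digits, all taken from those of `x`, so it obeys the same digit
constraints and lies in `C_e`.
-/

namespace Nat

/-- A zero digit of `x` could become a leading zero of the truncation, which `digits` drops. -/
theorem digits_mod_pow_eq_take {b : ℕ} (hb : 1 < b) (e : ℕ) {x : ℕ}
    (hx : ∀ d ∈ b.digits x, d ≠ 0) : b.digits (x % b ^ e) = (b.digits x).take e := by
  rw [self_mod_pow_eq_ofDigits_take e x hb]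
  refine digits_ofDigits b hb _ (fun d hd => digits_lt_base hb (List.mem_of_mem_take hd)) ?_
  exact fun hne => hx _ (List.mem_of_mem_take (List.getLast_mem hne))

end Nat

theorem powerOfTwo_bound_general (n : ℕ → ℕ) (e : ℕ)
    (A : Set ℕ)
    (hA : A = {x | 0 < x ∧ (∀ d ∈ Nat.digits 10 x, d ≠ 0) ∧
                   ∀ j, 2 ≤ j → j ≤ 9 → (Nat.digits 10 x).count j ≤ n j})
    (Ce : Set ℕ)
    (hCe : Ce = {x ∈ A | (Nat.digits 10 x).length < e} ∪
                {x | (Nat.digits 10 x).length = e ∧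
                     (∀ d ∈ Nat.digits 10 x, d ≠ 0) ∧
                     ∀ j, 2 ≤ j → j ≤ 9 → (Nat.digits 10 x).count j ≤ n j})
    (h : ∀ x ∈ Ce, ¬ 2 ^ e ∣ x) :
    ∀ x ∈ A, ¬ 2 ^ e ∣ x := by
  intro x hx hdvd
  rcases lt_or_ge (Nat.digits 10 x).length e with hshort | hlong
  · exact h x (hCe ▸ Or.inl ⟨hx, hshort⟩) hdvd
  obtain ⟨-, hnz, hcount⟩ := hA ▸ hx
  have hdigits := Nat.digits_mod_pow_eq_take (by norm_num) e hnz
  have hsub : ((Nat.digits 10 x).take e).Sublist (Nat.digits 10 x) := List.take_sublist _ _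
  have htrunc : x % 10 ^ e ∈ Ce := by
    refine hCe ▸ Or.inr ⟨?_, ?_, ?_⟩ <;> simp only [hdigits]
    · exact List.length_take_of_le hlong
    · exact fun d hd => hnz d (hsub.mem hd)
    · exact fun j hj2 hj9 => (hsub.count_le j).trans (hcount j hj2 hj9)
  exact h _ htrunc ((Nat.dvd_mod_iff (pow_dvd_pow_of_dvd (by norm_num) e)).2 hdvd)

/-- Lemma bounding the power of two dividing elements of a digit-constrained set:
let `A` be the set of positive integers with no digit `0` and at most `n j`
occurrences of each digit `j ∈ {2,…,9}` (digit `1` unrestricted), and let `C_e`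
consist of the elements of `A` with fewer than `e` digits together with all
`e`-digit integers without digit `0` satisfying the same count constraints.
If no element of `C_e` is divisible by `2^e`, then no element of `A` is. -/
theorem powerOfTwo_bound (n : ℕ → ℕ) (e : ℕ) (he : 1 ≤ e)
    (A : Set ℕ)
    (hA : A = {x | 0 < x ∧ (∀ d ∈ Nat.digits 10 x, d ≠ 0) ∧
                   ∀ j, 2 ≤ j → j ≤ 9 → (Nat.digits 10 x).count j ≤ n j})
    (Ce : Set ℕ)
    (hCe : Ce = {x ∈ A | (Nat.digits 10 x).length < e} ∪
                {x | (Nat.digits 10 x).length = e ∧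
                     (∀ d ∈ Nat.digits 10 x, d ≠ 0) ∧
                     ∀ j, 2 ≤ j → j ≤ 9 → (Nat.digits 10 x).count j ≤ n j})
    (h : ∀ x ∈ Ce, ¬ 2 ^ e ∣ x) :
    ∀ x ∈ A, ¬ 2 ^ e ∣ x :=
  powerOfTwo_bound_general n e A hA Ce hCe h
end
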